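/- arXiv:2305.12551 — 3 statements merged into one kernel-verified Lean document; each statement's English description precedes it below -/
import Mathlib

section
/- Closed form of the Stein kernel on SO(N): with kernel k(X,Y) = exp(τ tr(XᵀY)) on SO(N) and the orthonormal left-invariant basis {X E_{ij}}_{i<j}, the function k_p satisfies k_p(X,Y) = tr[𝒜(Xᵀ(∇_X log p + τY))ᵀ 𝒜(Yᵀ(∇_Y log p + τX))] · e^{τ tr(XᵀY)} + (τ/2)(N−1) tr(XᵀY) e^{τ tr(XᵀY)} for any locally Lipschitz density p on SO(N). -/
open Matrix
open scoped Kronecker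

noncomputable section

/-- The orthonormal basis element `E_{ij}` (for `i < j`) of the Lie algebra `so(N)`:
`√2/2` at entry `(i,j)`, `−√2/2` at `(j,i)`, zeros elsewhere. -/
def Eb (N : ℕ) (i j : Fin N) : Matrix (Fin N) (Fin N) ℝ :=
  (Real.sqrt 2 / 2) • (Matrix.single i j (1 : ℝ) - Matrix.single j i (1 : ℝ))

/-- Derivative of `h` at `X` along the left-invariant vector field `X ↦ X·B` on `SO(N)`:
`d/dt h(X exp(tB)) |_{t=0}`. -/
def dirDeriv {N : ℕ} (h : Matrix (Fin N) (Fin N) ℝ → ℝ)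
    (B X : Matrix (Fin N) (Fin N) ℝ) : ℝ :=
  deriv (fun t : ℝ => h (X * NormedSpace.exp (t • B))) 0

/-- Skew-symmetrization `𝒜(A) = (A − Aᵀ)/2`. -/
def skewPart {N : ℕ} (A : Matrix (Fin N) (Fin N) ℝ) : Matrix (Fin N) (Fin N) ℝ :=
  (2⁻¹ : ℝ) • (A - Aᵀ)

/-- The kernel `k(X,Y) = exp(τ tr(XᵀY))` on `SO(N)`. -/
def kSON {N : ℕ} (τ : ℝ) (X Y : Matrix (Fin N) (Fin N) ℝ) : ℝ :=
  Real.exp (τ * (Xᵀ * Y).trace)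

/-- The Stein operator component `A_p^{ij} h = D^{ij} h + h · D^{ij} log p`, where
`D^{ij}` is the derivation along the left-invariant field `X ↦ X E_{ij}`
(the modular term vanishes: `SO(N)` is compact, hence unimodular). -/
def steinSON {N : ℕ} (p : Matrix (Fin N) (Fin N) ℝ → ℝ) (i j : Fin N)
    (h : Matrix (Fin N) (Fin N) ℝ → ℝ) (X : Matrix (Fin N) (Fin N) ℝ) : ℝ :=
  dirDeriv h (Eb N i j) X + h X * dirDeriv (fun Z => Real.log (p Z)) (Eb N i j) X

/-- The Stein kernel `k_p(X,Y) = Σ_{i<j} Ã_p^{ij} A_p^{ij} k(X,Y)`, `A_p^{ij}` acting on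
the first argument of `k` and `Ã_p^{ij}` on the second. -/
def kpSON {N : ℕ} (τ : ℝ) (p : Matrix (Fin N) (Fin N) ℝ → ℝ)
    (X Y : Matrix (Fin N) (Fin N) ℝ) : ℝ :=
  ∑ i : Fin N, ∑ j : Fin N, if i < j then
    steinSON p i j (fun Y' => steinSON p i j (fun X' => kSON τ X' Y') X) Y
  else 0

/-- The `p`-independent term `c(X,Y) = (τ/2)(N−1) tr(XᵀY) e^{τ tr(XᵀY)}`. -/
def cSON {N : ℕ} (τ : ℝ) (X Y : Matrix (Fin N) (Fin N) ℝ) : ℝ :=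
  (τ / 2) * ((N : ℝ) - 1) * (Xᵀ * Y).trace * Real.exp (τ * (Xᵀ * Y).trace)

/-!
Differentiating `k` along `t ↦ X exp(tE)` multiplies it by `τ tr((XE)ᵀY)`, so with
`C = Xᵀ(∇_X log p + τY)`, `D = Yᵀ(∇_Y log p + τX)` each summand of `k_p` is
`k(X,Y) (τ tr(Eᵀ XᵀY E) + tr(EᵀC) tr(EᵀD))` with `E = E_{ij}`. This is even in `E` and vanishes
for `i = j`, so the sum over `i < j` is half the sum over all pairs, where orthonormality of the
`E_{ij}` gives `Σ tr(EᵀC) tr(EᵀD) = 2 tr(𝒜(C)ᵀ 𝒜(D))` and `Σ tr(Eᵀ M E) = (N − 1) tr M`.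
-/

section SymmetricSum

variable {ι : Type*} [Fintype ι] [LinearOrder ι]

theorem sum_ite_lt_eq_half_sum_of_symm (f : ι → ι → ℝ) (hsymm : ∀ i j, f i j = f j i)
    (hdiag : ∀ i, f i i = 0) :
    ∑ i, ∑ j, (if i < j then f i j else 0) = (∑ i, ∑ j, f i j) / 2 := by
  set g : ι → ι → ℝ := fun i j => if i < j then f i j else 0
  have hsplit : ∀ i j, f i j = g i j + g j i := by
    intro i j
    rcases lt_trichotomy i j with h | rfl | h
    · simp [g, h, h.not_gt]
    · simp [g, hdiag]
    · simp [g, h, h.not_gt, hsymm i j]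
  have hswap : ∑ i, ∑ j, g j i = ∑ i, ∑ j, g i j := Finset.sum_comm
  have htotal : ∑ i, ∑ j, f i j = 2 * ∑ i, ∑ j, g i j := by
    simp only [hsplit, Finset.sum_add_distrib, hswap]
    ring
  rw [htotal]
  ring

end SymmetricSum

section ExpCurve

variable {𝔸 : Type*} [NormedRing 𝔸] [NormedAlgebra ℝ 𝔸] [CompleteSpace 𝔸]

theorem hasDerivAt_mul_exp_smul (x b : 𝔸) :
    HasDerivAt (fun t : ℝ => x * NormedSpace.exp (t • b)) (x * b) 0 := by
  simpa using (hasDerivAt_exp_smul_const' (𝕂 := ℝ) b 0).const_mul x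

end ExpCurve

theorem trace_transpose_mul_comm {m n R : Type*} [Fintype m] [Fintype n] [CommSemiring R]
    (A B : Matrix m n R) : (Aᵀ * B).trace = (Bᵀ * A).trace := by
  rw [← Matrix.trace_transpose, Matrix.transpose_mul, Matrix.transpose_transpose]

theorem kSON_comm {N : ℕ} (τ : ℝ) (X Y : Matrix (Fin N) (Fin N) ℝ) :
    kSON τ X Y = kSON τ Y X := by
  rw [kSON, kSON, trace_transpose_mul_comm]

section BasisEb

variable {N : ℕ}

theorem sqrt_two_div_two_mul_self : Real.sqrt 2 / 2 * (Real.sqrt 2 / 2) = 1 / 2 := by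
  rw [div_mul_div_comm, Real.mul_self_sqrt zero_le_two]
  norm_num

theorem Eb_self (i : Fin N) : Eb N i i = 0 := by
  simp [Eb]

theorem Eb_swap (i j : Fin N) : Eb N j i = -Eb N i j := by
  rw [Eb, Eb, ← smul_neg, neg_sub]

theorem trace_transpose_Eb_mul (C : Matrix (Fin N) (Fin N) ℝ) (i j : Fin N) :
    ((Eb N i j)ᵀ * C).trace = Real.sqrt 2 / 2 * (C i j - C j i) := by
  simp [Eb, Matrix.transpose_single, Matrix.sub_mul, Matrix.trace_single_mul, mul_sub]

theorem trace_transpose_Eb_mul_mul_Eb (M : Matrix (Fin N) (Fin N) ℝ) {i j : Fin N} (h : i ≠ j) :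
    ((Eb N i j)ᵀ * M * Eb N i j).trace = (M i i + M j j) / 2 := by
  simp only [Eb, Matrix.transpose_smul, Matrix.transpose_sub, Matrix.transpose_single,
    Matrix.smul_mul, Matrix.mul_smul, Matrix.sub_mul, Matrix.mul_sub, Matrix.trace_smul,
    Matrix.trace_sub, Matrix.trace_mul_single, Matrix.single_mul_apply_same,
    Matrix.single_mul_apply_of_ne (c := (1 : ℝ)) _ _ _ _ h,
    Matrix.single_mul_apply_of_ne (c := (1 : ℝ)) _ _ _ _ h.symm, sub_zero, zero_sub,
    MulOpposite.op_one, one_smul, one_mul, smul_eq_mul]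
  linear_combination (M i i + M j j) * sqrt_two_div_two_mul_self

theorem sum_trace_transpose_Eb_mul_mul_Eb (M : Matrix (Fin N) (Fin N) ℝ) :
    ∑ i, ∑ j, ((Eb N i j)ᵀ * M * Eb N i j).trace = ((N : ℝ) - 1) * M.trace := by
  have hterm : ∀ i j : Fin N, ((Eb N i j)ᵀ * M * Eb N i j).trace =
      (M i i + M j j) / 2 - if i = j then M i i else 0 := by
    intro i j
    by_cases h : i = j
    · subst h
      simp [Eb_self]
    · simp [trace_transpose_Eb_mul_mul_Eb M h, h]
  simp only [hterm]
  simp only [Finset.sum_sub_distrib, Finset.sum_ite_eq, Finset.mem_univ, if_true,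
    add_div, Finset.sum_add_distrib, Finset.sum_const, Finset.card_univ, Fintype.card_fin,
    nsmul_eq_mul, ← Finset.sum_div, ← Finset.mul_sum, Matrix.trace, Matrix.diag]
  ring

theorem sum_trace_transpose_Eb_mul_mul_trace_transpose_Eb_mul (C D : Matrix (Fin N) (Fin N) ℝ) :
    ∑ i, ∑ j, ((Eb N i j)ᵀ * C).trace * ((Eb N i j)ᵀ * D).trace =
      2 * ((skewPart C)ᵀ * skewPart D).trace := by
  simp only [trace_transpose_Eb_mul]
  simp only [Matrix.trace, Matrix.diag, Matrix.mul_apply,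
    Matrix.transpose_apply, skewPart, Matrix.smul_apply, Matrix.sub_apply, smul_eq_mul,
    Finset.mul_sum]
  rw [Finset.sum_comm]
  refine Finset.sum_congr rfl fun i _ => Finset.sum_congr rfl fun j _ => ?_
  linear_combination (C i j - C j i) * (D i j - D j i) * sqrt_two_div_two_mul_self

end BasisEb

section MatrixCalculus

-- Any norm would do: it only serves to make `NormedSpace.exp` a normed-algebra exponential.
attribute [local instance] Matrix.linftyOpNormedRing Matrix.linftyOpNormedAlgebra

variable {N : ℕ}

theorem hasDerivAt_trace_mul_mul_exp (C X B : Matrix (Fin N) (Fin N) ℝ) :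
    HasDerivAt (fun t : ℝ => (C * (X * NormedSpace.exp (t • B))).trace) (C * (X * B)).trace 0 :=
  let L := (Matrix.traceLinearMap (Fin N) ℝ ℝ ∘ₗ LinearMap.mulLeft ℝ C).toContinuousLinearMap
  L.hasFDerivAt.comp_hasDerivAt 0 (hasDerivAt_mul_exp_smul X B)

theorem hasDerivAt_kSON_mul_exp (τ : ℝ) (X Y B : Matrix (Fin N) (Fin N) ℝ) :
    HasDerivAt (fun t : ℝ => kSON τ X (Y * NormedSpace.exp (t • B)))
      (τ * (Xᵀ * (Y * B)).trace * kSON τ X Y) 0 := by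
  have := ((hasDerivAt_trace_mul_mul_exp Xᵀ Y B).const_mul τ).exp
  simpa [kSON, mul_comm] using this

theorem steinSON_kSON_left (τ : ℝ) (p : Matrix (Fin N) (Fin N) ℝ → ℝ) (i j : Fin N)
    (X Y : Matrix (Fin N) (Fin N) ℝ) :
    steinSON p i j (fun X' => kSON τ X' Y) X =
      (τ * ((X * Eb N i j)ᵀ * Y).trace + dirDeriv (fun Z => Real.log (p Z)) (Eb N i j) X) *
        kSON τ X Y := by
  have hderiv := hasDerivAt_kSON_mul_exp τ Y X (Eb N i j)
  simp only [kSON_comm τ Y] at hderiv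
  rw [steinSON, dirDeriv, hderiv.deriv, trace_transpose_mul_comm Y]
  ring

theorem steinSON_steinSON_kSON (τ : ℝ) (p : Matrix (Fin N) (Fin N) ℝ → ℝ) (i j : Fin N)
    (X Y : Matrix (Fin N) (Fin N) ℝ) :
    steinSON p i j (fun Y' => steinSON p i j (fun X' => kSON τ X' Y') X) Y =
      kSON τ X Y * (τ * ((X * Eb N i j)ᵀ * (Y * Eb N i j)).trace +
        (τ * ((X * Eb N i j)ᵀ * Y).trace + dirDeriv (fun Z => Real.log (p Z)) (Eb N i j) X) *
          (τ * (Xᵀ * (Y * Eb N i j)).trace + dirDeriv (fun Z => Real.log (p Z)) (Eb N i j) Y)) := by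
  have hlinear := ((hasDerivAt_trace_mul_mul_exp (X * Eb N i j)ᵀ Y (Eb N i j)).const_mul τ).add_const
    (dirDeriv (fun Z => Real.log (p Z)) (Eb N i j) X)
  have hderiv := hlinear.fun_mul (hasDerivAt_kSON_mul_exp τ X Y (Eb N i j))
  simp only [steinSON_kSON_left]
  rw [steinSON, dirDeriv, hderiv.deriv]
  simp only [zero_smul, NormedSpace.exp_zero, mul_one]
  ring

theorem steinSON_steinSON_kSON_of_grad (τ : ℝ) (p : Matrix (Fin N) (Fin N) ℝ → ℝ) (i j : Fin N)
    {X Y G H : Matrix (Fin N) (Fin N) ℝ}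
    (hX : dirDeriv (fun Z => Real.log (p Z)) (Eb N i j) X = (Gᵀ * (X * Eb N i j)).trace)
    (hY : dirDeriv (fun Z => Real.log (p Z)) (Eb N i j) Y = (Hᵀ * (Y * Eb N i j)).trace) :
    steinSON p i j (fun Y' => steinSON p i j (fun X' => kSON τ X' Y') X) Y =
      kSON τ X Y * (τ * ((Eb N i j)ᵀ * (Xᵀ * Y) * Eb N i j).trace +
        ((Eb N i j)ᵀ * (Xᵀ * (G + τ • Y))).trace * ((Eb N i j)ᵀ * (Yᵀ * (H + τ • X))).trace) := by
  rw [steinSON_steinSON_kSON, hX, hY, trace_transpose_mul_comm G, trace_transpose_mul_comm H,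
    trace_transpose_mul_comm X]
  simp only [Matrix.transpose_mul, Matrix.mul_assoc, Matrix.mul_add,
    Matrix.mul_smul, Matrix.trace_add, Matrix.trace_smul, smul_eq_mul]
  ring

end MatrixCalculus

theorem kp_closed_form_SON_general
    {N : ℕ} (τ : ℝ)
    (p : Matrix (Fin N) (Fin N) ℝ → ℝ)
    -- `gradLog X` is the Riemannian gradient `∇_X log p`: it is tangent at `X` and
    -- represents all the directional derivatives `D^{ij} log p`
    (gradLog : Matrix (Fin N) (Fin N) ℝ → Matrix (Fin N) (Fin N) ℝ)
    (hgrad : ∀ X ∈ Matrix.specialOrthogonalGroup (Fin N) ℝ, ∀ i j : Fin N,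
      dirDeriv (fun Z => Real.log (p Z)) (Eb N i j) X =
        ((gradLog X)ᵀ * (X * Eb N i j)).trace) :
    ∀ X ∈ Matrix.specialOrthogonalGroup (Fin N) ℝ,
    ∀ Y ∈ Matrix.specialOrthogonalGroup (Fin N) ℝ,
      kpSON τ p X Y =
        ((skewPart (Xᵀ * (gradLog X + τ • Y)))ᵀ *
            skewPart (Yᵀ * (gradLog Y + τ • X))).trace *
          Real.exp (τ * (Xᵀ * Y).trace) +
        (τ / 2) * ((N : ℝ) - 1) * (Xᵀ * Y).trace * Real.exp (τ * (Xᵀ * Y).trace) := by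
  intro X hX Y hY
  set f : Fin N → Fin N → ℝ := fun i j => kSON τ X Y *
    (τ * ((Eb N i j)ᵀ * (Xᵀ * Y) * Eb N i j).trace +
      ((Eb N i j)ᵀ * (Xᵀ * (gradLog X + τ • Y))).trace *
        ((Eb N i j)ᵀ * (Yᵀ * (gradLog Y + τ • X))).trace)
  have hf_symm : ∀ i j, f i j = f j i := by
    intro i j
    simp [f, Eb_swap i j]
  have hf_diag : ∀ i, f i i = 0 := by
    simp [f, Eb_self]
  calc kpSON τ p X Y = ∑ i, ∑ j, if i < j then f i j else 0 := by
        refine Finset.sum_congr rfl fun i _ => Finset.sum_congr rfl fun j _ => ?_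
        rw [steinSON_steinSON_kSON_of_grad τ p i j (hgrad X hX i j) (hgrad Y hY i j)]
    _ = (∑ i, ∑ j, f i j) / 2 := sum_ite_lt_eq_half_sum_of_symm f hf_symm hf_diag
    _ = _ := by
        simp only [f, ← Finset.mul_sum, Finset.sum_add_distrib, sum_trace_transpose_Eb_mul_mul_Eb,
          sum_trace_transpose_Eb_mul_mul_trace_transpose_Eb_mul, kSON]
        ring

theorem kp_closed_form_SON
    {N : ℕ} (τ : ℝ) (hτ : 0 < τ)
    (p : Matrix (Fin N) (Fin N) ℝ → ℝ)
    -- `p` is a locally Lipschitz probability density on `SO(N)`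
    (hpos : ∀ X ∈ Matrix.specialOrthogonalGroup (Fin N) ℝ, 0 < p X)
    (hplip : LocallyLipschitz fun v : Fin N → Fin N → ℝ => p (Matrix.of v))
    -- `gradLog X` is the Riemannian gradient `∇_X log p`: it is tangent at `X` and
    -- represents all the directional derivatives `D^{ij} log p`
    (gradLog : Matrix (Fin N) (Fin N) ℝ → Matrix (Fin N) (Fin N) ℝ)
    (htan : ∀ X ∈ Matrix.specialOrthogonalGroup (Fin N) ℝ,
      (Xᵀ * gradLog X)ᵀ = -(Xᵀ * gradLog X))
    (hgrad : ∀ X ∈ Matrix.specialOrthogonalGroup (Fin N) ℝ, ∀ i j : Fin N,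
      dirDeriv (fun Z => Real.log (p Z)) (Eb N i j) X =
        ((gradLog X)ᵀ * (X * Eb N i j)).trace) :
    ∀ X ∈ Matrix.specialOrthogonalGroup (Fin N) ℝ,
    ∀ Y ∈ Matrix.specialOrthogonalGroup (Fin N) ℝ,
      kpSON τ p X Y =
        ((skewPart (Xᵀ * (gradLog X + τ • Y)))ᵀ *
            skewPart (Yᵀ * (gradLog Y + τ • X))).trace *
          Real.exp (τ * (Xᵀ * Y).trace) +
        (τ / 2) * ((N : ℝ) - 1) * (Xᵀ * Y).trace * Real.exp (τ * (Xᵀ * Y).trace) :=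
  kp_closed_form_SON_general τ p gradLog hgrad
end
end

section
/- Closed form of the MKSDE for the von Mises-Fisher family on SO(N): given samples X_1,…,X_n ∈ SO(N) and weights q, w, the weighted empirical KSD objective F ↦ wKSD²_n(F) built from k_p^{vMF} is, up to an additive term independent of F, the quadratic form vec(F)ᵀ A vec(F) − 2 bᵀ vec(F), where b = vec(B) with B = (τ/(2n²)) Σ_{i,j} (X_i − X_j) 𝒜(X_iᵀX_j) e^{τ tr(X_iᵀX_j)} (q(X_i)/w(X_i))(q(X_j)/w(X_j)) and A = (1/(2n²)) Σ_{i,j} [I ⊗ X_i X_jᵀ − (X_iᵀ ⊗ X_j) S_{N,N}] e^{τ tr(X_iᵀX_j)} (q(X_i)/w(X_i))(q(X_j)/w(X_j)); hence (when A is invertible) the minimizer is F̂ = vec⁻¹(A⁻¹ b). -/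
open Matrix
open scoped Kronecker

noncomputable section

/-- Column-stacking vectorization: `vecM F (c, r) = F r c`. -/
def vecM {N : ℕ} (F : Matrix (Fin N) (Fin N) ℝ) : Fin N × Fin N → ℝ :=
  fun cr => F cr.2 cr.1

/-- Inverse of column-stacking vectorization. -/
def unvecM {N : ℕ} (v : Fin N × Fin N → ℝ) : Matrix (Fin N) (Fin N) ℝ :=
  Matrix.of fun r c => v (c, r)

/-- The perfect shuffle matrix `S_{N,N}`, characterized by `S_{N,N} vec F = vec Fᵀ`. -/
def shuffle (N : ℕ) : Matrix (Fin N × Fin N) (Fin N × Fin N) ℝ :=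
  Matrix.of fun a b => if a.1 = b.2 ∧ a.2 = b.1 then (1 : ℝ) else 0

/-- The von Mises–Fisher Stein kernel on `SO(N)` (closed form, parameter `F`). -/
def kvMF {N : ℕ} (τ : ℝ) (F X Y : Matrix (Fin N) (Fin N) ℝ) : ℝ :=
  cSON τ X Y +
    ((skewPart (Xᵀ * (F + τ • Y)))ᵀ * skewPart (Yᵀ * (F + τ • X))).trace *
      Real.exp (τ * (Xᵀ * Y).trace)

/-!
Since `Uᵀ(F + τV)` is affine in `F`, the trace term of `k_p^{vMF}(U, V)` is a quadratic polynomial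
in `F`. With `(Q ⊗ P) vec G = vec (P G Qᵀ)` and `S_{N,N} vec F = vec Fᵀ`, its quadratic part is
`½ vec(F)ᵀ (I ⊗ UVᵀ − (Uᵀ ⊗ V) S_{N,N}) vec F` and its linear part is `−τ ⟨(U − V) 𝒜(UᵀV), F⟩`;
the weighted sum over the samples is therefore `vec(F)ᵀ A vec F − 2 bᵀ vec F` plus its value at
`F = 0`.

The minimiser is `A⁻¹ b` as soon as `A` is positive semidefinite. With `cᵢ = q(Xᵢ)/w(Xᵢ)`,
`vec(F)ᵀ A vec F = n⁻² Σᵢⱼ e^{τ ⟨Xᵢ, Xⱼ⟩} cᵢ cⱼ ⟨𝒜(XᵢᵀF), 𝒜(XⱼᵀF)⟩` is the sum of the entries of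
the Hadamard product of three positive semidefinite matrices: a Gram matrix, the rank-one matrix
`c cᵀ`, and `(e^{τ ⟨Xᵢ, Xⱼ⟩})ᵢⱼ`, which is positive semidefinite for `τ ≥ 0` because every term
of the exponential series of a Gram matrix is, by the Schur product theorem.
-/

namespace Matrix

variable {ι : Type*} [Fintype ι]

theorem posSemidef_dotProduct_gram {κ : Type*} [Fintype κ] (v : ι → κ → ℝ) :
    (of fun i j => v i ⬝ᵥ v j).PosSemidef := by
  convert posSemidef_self_mul_conjTranspose (of v) using 1
  ext i j
  simp [mul_apply, dotProduct]

theorem PosSemidef.map_pow {G : Matrix ι ι ℝ} (hG : G.PosSemidef) (m : ℕ) :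
    (G.map (· ^ m)).PosSemidef := by
  induction m with
  | zero =>
    convert posSemidef_vecMulVec_self_star (1 : ι → ℝ) using 1
    ext i j
    simp [vecMulVec_apply]
  | succ m ih =>
    have h : G.map (· ^ (m + 1)) = G.map (· ^ m) ⊙ G := by
      ext i j
      simp [pow_succ]
    rw [h]
    exact ih.hadamard hG

theorem PosSemidef.map_exp_mul {G : Matrix ι ι ℝ} (hG : G.PosSemidef) {τ : ℝ} (hτ : 0 ≤ τ) :
    (G.map fun g => Real.exp (τ * g)).PosSemidef := by
  refine .of_dotProduct_mulVec_nonneg (hG.isHermitian.map _ fun _ => rfl) fun x => ?_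
  have hsum : HasSum (fun m : ℕ => τ ^ m / m.factorial * (star x ⬝ᵥ (G.map (· ^ m) *ᵥ x)))
      (star x ⬝ᵥ ((G.map fun g => Real.exp (τ * g)) *ᵥ x)) := by
    simp only [dotProduct, mulVec, map_apply, Finset.mul_sum]
    refine hasSum_sum fun i _ => hasSum_sum fun j _ => ?_
    have h := (NormedSpace.expSeries_div_hasSum_exp (τ * G i j)).mul_left (star x i * x j)
    rw [← Real.exp_eq_exp_ℝ, mul_right_comm, mul_assoc] at h
    exact h.congr_fun fun m => by rw [mul_pow]; ring
  exact hsum.nonneg fun m => mul_nonneg (by positivity) ((hG.map_pow m).dotProduct_mulVec_nonneg x)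

theorem PosSemidef.sum_apply_nonneg {M : Matrix ι ι ℝ} (hM : M.PosSemidef) :
    0 ≤ ∑ i, ∑ j, M i j := by
  simpa [dotProduct, mulVec, Finset.mul_sum] using hM.dotProduct_mulVec_nonneg 1

theorem PosSemidef.isMinOn_dotProduct_mulVec_sub [DecidableEq ι]
    {A : Matrix ι ι ℝ} (hA : A.PosSemidef) [Invertible A] (b : ι → ℝ) :
    IsMinOn (fun v => v ⬝ᵥ (A *ᵥ v) - 2 * (b ⬝ᵥ v)) Set.univ (A⁻¹ *ᵥ b) := by
  refine isMinOn_univ_iff.mpr fun v => ?_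
  set x := A⁻¹ *ᵥ b
  have hAx : A *ᵥ x = b := by simp [x, mulVec_mulVec]
  have hsymm : v ⬝ᵥ (A *ᵥ x) = x ⬝ᵥ (A *ᵥ v) := by
    rw [dotProduct_mulVec, dotProduct_comm, ← mulVec_transpose,
      ← conjTranspose_eq_transpose_of_trivial, hA.isHermitian.eq]
  have hd := hA.dotProduct_mulVec_nonneg (v - x)
  simp only [star_trivial, mulVec_sub, dotProduct_sub, sub_dotProduct] at hd
  simp only [hAx, dotProduct_comm b] at hsymm hd ⊢
  linarith

end Matrix

section VonMisesFisher

variable {N : ℕ}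

theorem vecM_eq_vec (F : Matrix (Fin N) (Fin N) ℝ) : vecM F = vec F := rfl

theorem vecM_unvecM (v : Fin N × Fin N → ℝ) : vecM (unvecM v) = v := rfl

theorem shuffle_mulVec_vec (F : Matrix (Fin N) (Fin N) ℝ) : shuffle N *ᵥ vec F = vec Fᵀ := by
  ext ⟨c, r⟩
  simp [shuffle, mulVec, dotProduct, vec, Fintype.sum_prod_type, ite_and]

def vmfBlock (U V : Matrix (Fin N) (Fin N) ℝ) : Matrix (Fin N × Fin N) (Fin N × Fin N) ℝ :=
  1 ⊗ₖ (U * Vᵀ) - (Uᵀ ⊗ₖ V) * shuffle N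

theorem transpose_vmfBlock (U V : Matrix (Fin N) (Fin N) ℝ) :
    (vmfBlock U V)ᵀ = vmfBlock V U := by
  ext ⟨a₁, a₂⟩ ⟨b₁, b₂⟩
  simp [vmfBlock, shuffle, mul_apply, one_apply, Fintype.sum_prod_type, ite_and, eq_comm,
    mul_comm]

theorem vec_dotProduct_vmfBlock_mulVec (U V F G : Matrix (Fin N) (Fin N) ℝ) :
    vec F ⬝ᵥ (vmfBlock U V *ᵥ vec G) = (Fᵀ * U * Vᵀ * G).trace - (Fᵀ * V * Gᵀ * U).trace := by
  rw [vmfBlock, sub_mulVec, ← mulVec_mulVec, shuffle_mulVec_vec, kronecker_mulVec_vec,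
    kronecker_mulVec_vec, dotProduct_sub, vec_dotProduct_vec, vec_dotProduct_vec]
  simp only [transpose_one, mul_one, transpose_transpose, Matrix.mul_assoc]

theorem trace_skewPart_transpose_mul_skewPart (M K : Matrix (Fin N) (Fin N) ℝ) :
    ((skewPart M)ᵀ * skewPart K).trace = 2⁻¹ * ((Mᵀ * K).trace - (M * K).trace) := by
  have h₁ : (Mᵀ * Kᵀ).trace = (M * K).trace := trace_transpose_mul M K
  have h₂ : (M * Kᵀ).trace = (Mᵀ * K).trace := by
    rw [← trace_transpose, transpose_mul, transpose_transpose, trace_mul_comm]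
  simp only [skewPart, transpose_smul, transpose_sub, transpose_transpose, Matrix.smul_mul,
    Matrix.mul_smul, Matrix.sub_mul, Matrix.mul_sub, trace_smul, trace_sub, smul_eq_mul, h₁, h₂]
  ring

theorem vec_dotProduct_vmfBlock_mulVec_self (U V F : Matrix (Fin N) (Fin N) ℝ) :
    vec F ⬝ᵥ (vmfBlock U V *ᵥ vec F) =
      2 * (vec (skewPart (Uᵀ * F)) ⬝ᵥ vec (skewPart (Vᵀ * F))) := by
  rw [vec_dotProduct_vmfBlock_mulVec, vec_dotProduct_vec, trace_skewPart_transpose_mul_skewPart]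
  have h : (Uᵀ * F * (Vᵀ * F)).trace = (Fᵀ * V * Fᵀ * U).trace := by
    rw [← trace_transpose]
    simp only [transpose_mul, transpose_transpose, Matrix.mul_assoc]
  simp only [transpose_mul, transpose_transpose, Matrix.mul_assoc] at h ⊢
  rw [h]
  ring

theorem kvMF_eq_add (τ : ℝ) (F U V : Matrix (Fin N) (Fin N) ℝ) :
    kvMF τ F U V = kvMF τ 0 U V + Real.exp (τ * (Uᵀ * V).trace) *
      (2⁻¹ * (vec F ⬝ᵥ (vmfBlock U V *ᵥ vec F)) -
        τ * (vec ((U - V) * skewPart (Uᵀ * V)) ⬝ᵥ vec F)) := by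
  rw [vec_dotProduct_vmfBlock_mulVec, vec_dotProduct_vec]
  simp only [kvMF, zero_add, trace_skewPart_transpose_mul_skewPart]
  have e₁ : (Uᵀ * (F * (Vᵀ * F))).trace = (Fᵀ * (V * (Fᵀ * U))).trace := by
    rw [← trace_transpose]
    simp only [transpose_mul, transpose_transpose, Matrix.mul_assoc]
  have e₂ : (Fᵀ * (U * (Vᵀ * U))).trace = (Uᵀ * (V * (Uᵀ * F))).trace := by
    rw [← trace_transpose]
    simp only [transpose_mul, transpose_transpose, Matrix.mul_assoc]
  have e₃ : (Uᵀ * (F * (Vᵀ * U))).trace = (Vᵀ * (U * (Uᵀ * F))).trace := by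
    rw [← Matrix.mul_assoc, trace_mul_comm, Matrix.mul_assoc]
  simp only [skewPart, transpose_smul, transpose_sub, transpose_add, transpose_mul,
    transpose_transpose, Matrix.smul_mul, Matrix.mul_smul, Matrix.sub_mul, Matrix.mul_sub,
    Matrix.mul_add, Matrix.add_mul, trace_smul, trace_sub, trace_add, smul_eq_mul,
    Matrix.mul_assoc]
  linear_combination
    Real.exp (τ * (Uᵀ * V).trace) * (-(2⁻¹ : ℝ) * e₁ + (τ * 2⁻¹) * e₂ - (τ * 2⁻¹) * e₃)

end VonMisesFisher

section Samples

variable {N n : ℕ}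

theorem posSemidef_sum_smul_vmfBlock {a : Matrix (Fin n) (Fin n) ℝ} (ha : a.PosSemidef)
    (X : Fin n → Matrix (Fin N) (Fin N) ℝ) :
    (∑ i, ∑ j, a i j • vmfBlock (X i) (X j)).PosSemidef := by
  refine .of_dotProduct_mulVec_nonneg ?_ fun x => ?_
  · rw [IsHermitian, conjTranspose_eq_transpose_of_trivial]
    simp only [transpose_sum, transpose_smul, transpose_vmfBlock]
    rw [Finset.sum_comm]
    refine Finset.sum_congr rfl fun i _ => Finset.sum_congr rfl fun j _ => ?_
    rw [← ha.isHermitian.apply i j, star_trivial]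
  · obtain ⟨P, rfl⟩ := vec_bijective.surjective x
    have h := (ha.hadamard (posSemidef_dotProduct_gram fun i => vec (skewPart ((X i)ᵀ * P))))
      |>.sum_apply_nonneg
    simp only [star_trivial, sum_mulVec, smul_mulVec, dotProduct_sum, dotProduct_smul,
      smul_eq_mul, vec_dotProduct_vmfBlock_mulVec_self]
    simp only [hadamard_apply, of_apply] at h
    simp only [mul_left_comm (a _ _) 2, ← Finset.mul_sum]
    exact mul_nonneg zero_le_two h

theorem posSemidef_exp_trace_weighted {τ : ℝ} (hτ : 0 ≤ τ) (X : Fin n → Matrix (Fin N) (Fin N) ℝ)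
    (c : Fin n → ℝ) :
    (of fun i j => Real.exp (τ * ((X i)ᵀ * X j).trace) * c i * c j).PosSemidef := by
  have h := ((posSemidef_dotProduct_gram fun i => vec (X i)).map_exp_mul hτ).hadamard
    (posSemidef_vecMulVec_self_star c)
  have heq : (of fun i j => Real.exp (τ * ((X i)ᵀ * X j).trace) * c i * c j) =
      ((of fun i j => vec (X i) ⬝ᵥ vec (X j)).map fun g => Real.exp (τ * g)) ⊙
        vecMulVec c (star c) := by
    ext i j
    simp [vec_dotProduct_vec, vecMulVec_apply, mul_assoc]
  rw [heq]
  exact h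

def wKSDsq (τ : ℝ) (X : Fin n → Matrix (Fin N) (Fin N) ℝ) (q w : Matrix (Fin N) (Fin N) ℝ → ℝ)
    (F : Matrix (Fin N) (Fin N) ℝ) : ℝ :=
  ((n : ℝ) ^ 2)⁻¹ * ∑ i, ∑ j,
    kvMF τ F (X i) (X j) * q (X i) * q (X j) * (w (X i))⁻¹ * (w (X j))⁻¹

def vmfWeight (τ : ℝ) (X : Fin n → Matrix (Fin N) (Fin N) ℝ)
    (q w : Matrix (Fin N) (Fin N) ℝ → ℝ) : Matrix (Fin n) (Fin n) ℝ :=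
  of fun i j => Real.exp (τ * ((X i)ᵀ * X j).trace) * (q (X i) / w (X i)) * (q (X j) / w (X j))

theorem wKSDsq_eq_add (τ : ℝ) (X : Fin n → Matrix (Fin N) (Fin N) ℝ)
    (q w : Matrix (Fin N) (Fin N) ℝ → ℝ) {A : Matrix (Fin N × Fin N) (Fin N × Fin N) ℝ}
    {B : Matrix (Fin N) (Fin N) ℝ}
    (hA : A = (1 / (2 * (n : ℝ) ^ 2)) •
      ∑ i, ∑ j, vmfWeight τ X q w i j • vmfBlock (X i) (X j))
    (hB : B = (τ / (2 * (n : ℝ) ^ 2)) •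
      ∑ i, ∑ j, vmfWeight τ X q w i j • ((X i - X j) * skewPart ((X i)ᵀ * X j)))
    (F : Matrix (Fin N) (Fin N) ℝ) :
    wKSDsq τ X q w F =
      vec F ⬝ᵥ (A *ᵥ vec F) - 2 * (vec B ⬝ᵥ vec F) + wKSDsq τ X q w 0 := by
  subst hA hB
  simp only [wKSDsq, smul_mulVec, sum_mulVec, dotProduct_smul, dotProduct_sum, vec_smul,
    vec_sum, smul_dotProduct, sum_dotProduct, smul_eq_mul, Finset.mul_sum,
    ← Finset.sum_sub_distrib, ← Finset.sum_add_distrib]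
  refine Finset.sum_congr rfl fun i _ => Finset.sum_congr rfl fun j _ => ?_
  rw [kvMF_eq_add τ F, vmfWeight, of_apply]
  simp only [div_eq_mul_inv]
  ring

end Samples

theorem mksde_vMF_closed_form_general
    {N : ℕ} (τ : ℝ) (hτ : 0 < τ) (n : ℕ)
    -- the samples
    (X : Fin n → Matrix (Fin N) (Fin N) ℝ)
    -- the target density `q` and the sampling density `w` (only the ratios `q/w` at the
    -- samples enter)
    (q w : Matrix (Fin N) (Fin N) ℝ → ℝ)
    -- the matrices `B` (giving `b = vec B`) and `A` of the statement
    (B : Matrix (Fin N) (Fin N) ℝ)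
    (hB : B = (τ / (2 * (n : ℝ) ^ 2)) •
      ∑ i : Fin n, ∑ j : Fin n,
        (Real.exp (τ * ((X i)ᵀ * X j).trace) *
          (q (X i) / w (X i)) * (q (X j) / w (X j))) •
          ((X i - X j) * skewPart ((X i)ᵀ * X j)))
    (A : Matrix (Fin N × Fin N) (Fin N × Fin N) ℝ)
    (hA : A = (1 / (2 * (n : ℝ) ^ 2)) •
      ∑ i : Fin n, ∑ j : Fin n,
        (Real.exp (τ * ((X i)ᵀ * X j).trace) *
          (q (X i) / w (X i)) * (q (X j) / w (X j))) •
          ((1 : Matrix (Fin N) (Fin N) ℝ) ⊗ₖ (X i * (X j)ᵀ) -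
            ((X i)ᵀ ⊗ₖ X j) * shuffle N)) :
    -- the objective is the stated quadratic form up to an `F`-independent constant …
    (∃ c0 : ℝ, ∀ F : Matrix (Fin N) (Fin N) ℝ,
      ((n : ℝ) ^ 2)⁻¹ * ∑ i : Fin n, ∑ j : Fin n,
          kvMF τ F (X i) (X j) * q (X i) * q (X j) * (w (X i))⁻¹ * (w (X j))⁻¹ =
        vecM F ⬝ᵥ (A *ᵥ vecM F) - 2 * (vecM B ⬝ᵥ vecM F) + c0) ∧
    -- … hence for invertible `A` the MKSDE is `F̂ = vec⁻¹(A⁻¹ b)`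
    (∀ _ : Invertible A, ∀ F : Matrix (Fin N) (Fin N) ℝ,
      ((n : ℝ) ^ 2)⁻¹ * ∑ i : Fin n, ∑ j : Fin n,
          kvMF τ (unvecM (A⁻¹ *ᵥ vecM B)) (X i) (X j) *
            q (X i) * q (X j) * (w (X i))⁻¹ * (w (X j))⁻¹ ≤
      ((n : ℝ) ^ 2)⁻¹ * ∑ i : Fin n, ∑ j : Fin n,
          kvMF τ F (X i) (X j) * q (X i) * q (X j) * (w (X i))⁻¹ * (w (X j))⁻¹) := by
  have hobj (F : Matrix (Fin N) (Fin N) ℝ) := wKSDsq_eq_add τ X q w hA hB F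
  have hApsd : A.PosSemidef := by
    rw [hA]
    exact (posSemidef_sum_smul_vmfBlock (posSemidef_exp_trace_weighted hτ.le X _) X).smul
      (by positivity)
  refine ⟨⟨_, hobj⟩, fun _ F => ?_⟩
  have hmin := isMinOn_univ_iff.mp (hApsd.isMinOn_dotProduct_mulVec_sub (vecM B)) (vecM F)
  change wKSDsq τ X q w _ ≤ wKSDsq τ X q w F
  rw [hobj (unvecM _), hobj F, ← vecM_eq_vec (unvecM _), vecM_unvecM]
  simp only [vecM_eq_vec] at hmin ⊢
  linarith

theorem mksde_vMF_closed_form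
    {N : ℕ} (τ : ℝ) (hτ : 0 < τ) (n : ℕ) (hn : 0 < n)
    -- the samples
    (X : Fin n → Matrix (Fin N) (Fin N) ℝ)
    (hX : ∀ i, X i ∈ Matrix.specialOrthogonalGroup (Fin N) ℝ)
    -- the target density `q` and the sampling density `w` (only the ratios `q/w` at the
    -- samples enter)
    (q w : Matrix (Fin N) (Fin N) ℝ → ℝ) (hw : ∀ i, w (X i) ≠ 0)
    -- the matrices `B` (giving `b = vec B`) and `A` of the statement
    (B : Matrix (Fin N) (Fin N) ℝ)
    (hB : B = (τ / (2 * (n : ℝ) ^ 2)) •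
      ∑ i : Fin n, ∑ j : Fin n,
        (Real.exp (τ * ((X i)ᵀ * X j).trace) *
          (q (X i) / w (X i)) * (q (X j) / w (X j))) •
          ((X i - X j) * skewPart ((X i)ᵀ * X j)))
    (A : Matrix (Fin N × Fin N) (Fin N × Fin N) ℝ)
    (hA : A = (1 / (2 * (n : ℝ) ^ 2)) •
      ∑ i : Fin n, ∑ j : Fin n,
        (Real.exp (τ * ((X i)ᵀ * X j).trace) *
          (q (X i) / w (X i)) * (q (X j) / w (X j))) •
          ((1 : Matrix (Fin N) (Fin N) ℝ) ⊗ₖ (X i * (X j)ᵀ) -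
            ((X i)ᵀ ⊗ₖ X j) * shuffle N)) :
    -- the objective is the stated quadratic form up to an `F`-independent constant …
    (∃ c0 : ℝ, ∀ F : Matrix (Fin N) (Fin N) ℝ,
      ((n : ℝ) ^ 2)⁻¹ * ∑ i : Fin n, ∑ j : Fin n,
          kvMF τ F (X i) (X j) * q (X i) * q (X j) * (w (X i))⁻¹ * (w (X j))⁻¹ =
        vecM F ⬝ᵥ (A *ᵥ vecM F) - 2 * (vecM B ⬝ᵥ vecM F) + c0) ∧
    -- … hence for invertible `A` the MKSDE is `F̂ = vec⁻¹(A⁻¹ b)`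
    (∀ _ : Invertible A, ∀ F : Matrix (Fin N) (Fin N) ℝ,
      ((n : ℝ) ^ 2)⁻¹ * ∑ i : Fin n, ∑ j : Fin n,
          kvMF τ (unvecM (A⁻¹ *ᵥ vecM B)) (X i) (X j) *
            q (X i) * q (X j) * (w (X i))⁻¹ * (w (X j))⁻¹ ≤
      ((n : ℝ) ^ 2)⁻¹ * ∑ i : Fin n, ∑ j : Fin n,
          kvMF τ F (X i) (X j) * q (X i) * q (X j) * (w (X i))⁻¹ * (w (X j))⁻¹) :=
  mksde_vMF_closed_form_general τ hτ n X q w B hB A hA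
end
end

section
/- Convex localization lemma: let f : ℝ^n → ℝ be convex and C ⊂ ℝ^n a bounded open set. If there exists x₀ ∈ C with f(x₀) < inf_{x ∈ ∂C} f(x), then inf_{x ∉ C} f(x) = inf_{x ∈ ∂C} f(x), and the set of global minimizers of f is non-empty and contained in C. -/
/-!
If `y ∉ C`, the segment from `x₀ ∈ C` to `y` meets `∂C` at some `z ≠ x₀`. Since
`f x₀ < inf_{∂C} f ≤ f z`, convexity along the segment forces `f z ≤ f y`, so `inf_{∂C} f`
bounds `f` from below off `C`. Both claims follow, with existence of a minimizer coming from
compactness of `closure C`, outside of which `f` exceeds `f x₀`.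
-/

open Set Filter

theorem IsPreconnected.inter_frontier_nonempty {X : Type*} [TopologicalSpace X] {s t : Set X}
    (hs : IsPreconnected s) (hin : (s ∩ t).Nonempty) (hout : (s \ t).Nonempty) :
    (s ∩ frontier t).Nonempty := by
  have := Subtype.preconnectedSpace hs
  obtain ⟨x, hxs, hxt⟩ := hin
  obtain ⟨y, hys, hyt⟩ := hout
  have hy_out : ((↑) ⁻¹' t : Set s) ≠ univ := fun h =>
    hyt (show (⟨y, hys⟩ : s) ∈ (↑) ⁻¹' t from h ▸ mem_univ _)
  obtain ⟨z, hz⟩ := nonempty_frontier_iff.2 ⟨⟨⟨x, hxs⟩, hxt⟩, hy_out⟩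
  exact ⟨z, z.2, continuous_subtype_val.frontier_preimage_subset t hz⟩

theorem ConvexOn.mem_lowerBounds_image_compl {E : Type*} [AddCommGroup E] [Module ℝ E]
    [TopologicalSpace E] [IsTopologicalAddGroup E] [ContinuousSMul ℝ E] {f : E → ℝ}
    (hf : ConvexOn ℝ univ f) {C : Set E} {x₀ : E} {m : ℝ} (hx₀ : x₀ ∈ interior C)
    (hx₀m : f x₀ ≤ m) (hm : m ∈ lowerBounds (f '' frontier C)) :
    m ∈ lowerBounds (f '' Cᶜ) := by
  rintro _ ⟨y, hy, rfl⟩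
  obtain ⟨z, hz_seg, hz_fr⟩ := (convex_segment x₀ y).isPreconnected.inter_frontier_nonempty
    ⟨x₀, left_mem_segment ℝ x₀ y, interior_subset hx₀⟩ ⟨y, right_mem_segment ℝ x₀ y, hy⟩
  have hmz : m ≤ f z := hm (mem_image_of_mem f hz_fr)
  rcases eq_or_ne y z with rfl | hyz
  · exact hmz
  have hzx₀ : x₀ ≠ z := fun h => hz_fr.2 (h ▸ hx₀)
  have hz_open : z ∈ openSegment ℝ x₀ y := mem_openSegment_of_ne_left_right hzx₀ hyz hz_seg
  exact hmz.trans (hf.le_right_of_left_le trivial trivial hz_open (hx₀m.trans hmz))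

theorem IsGLB.of_subset_of_lowerBounds {α : Type*} [Preorder α] {s t : Set α} {a : α}
    (hs : IsGLB s a) (hst : s ⊆ t) (ht : a ∈ lowerBounds t) : IsGLB t a :=
  ⟨ht, fun _ hb => hs.2 (lowerBounds_mono_set hst hb)⟩

theorem convex_localization
    {n : ℕ} (f : EuclideanSpace ℝ (Fin n) → ℝ)
    (hf : ConvexOn ℝ Set.univ f)
    (C : Set (EuclideanSpace ℝ (Fin n)))
    (hCopen : IsOpen C) (hCbdd : Bornology.IsBounded C)
    (x₀ : EuclideanSpace ℝ (Fin n)) (hx₀ : x₀ ∈ C)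
    (hlt : f x₀ < sInf (f '' frontier C)) :
    sInf (f '' Cᶜ) = sInf (f '' frontier C) ∧
    {x | ∀ y, f x ≤ f y}.Nonempty ∧
    {x | ∀ y, f x ≤ f y} ⊆ C := by
  set m := sInf (f '' frontier C)
  have hfc : Continuous f := continuousOn_univ.1 (hf.continuousOn isOpen_univ)
  have hfr_bdd : BddBelow (f '' frontier C) :=
    ((hCbdd.isCompact_closure.of_isClosed_subset isClosed_frontier
      frontier_subset_closure).image hfc).bddBelow
  have hfr_compl : frontier C ⊆ Cᶜ := hCopen.frontier_eq ▸ sdiff_subset_compl _ _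
  have hm_compl : m ∈ lowerBounds (f '' Cᶜ) :=
    hf.mem_lowerBounds_image_compl (hCopen.interior_eq.symm ▸ hx₀) hlt.le
      fun _ hz => csInf_le hfr_bdd hz
  refine ⟨?_, ?_, fun x hx => ?_⟩
  · rcases (frontier C).eq_empty_or_nonempty with hfr | hfr
    · -- only when the space is a point: both sides are then `sInf ∅`
      have hC : C = univ :=
        (frontier_eq_empty_iff.1 hfr).resolve_left (nonempty_of_mem hx₀).ne_empty
      simp [m, hC]
    · exact ((isGLB_csInf (hfr.image f) hfr_bdd).of_subset_of_lowerBounds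
        (image_mono hfr_compl) hm_compl).csInf_eq ((hfr.mono hfr_compl).image f)
  · refine hfc.exists_forall_le' x₀ ?_
    filter_upwards [hCbdd.isCompact_closure.compl_mem_cocompact] with y hy
    exact hlt.le.trans (hm_compl (mem_image_of_mem f fun hyC => hy (subset_closure hyC)))
  · by_contra hxC
    exact (hlt.trans_le (hm_compl (mem_image_of_mem f hxC))).not_ge (hx x₀)
end
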